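/- arXiv:2209.10253 — 4 statements merged into one kernel-verified Lean document; each statement's English description precedes it below -/
import Mathlib

section
/- If A ⊆ ℕ is piecewise syndetic, then for every finite set F of polynomials with integer coefficients, zero constant term, and mapping ℕ into ℕ, and for every IP-set generated by a sequence ⟨x_n⟩ in ℕ (i.e., the set of all finite sums of distinct terms), there exist a ∈ ℕ and a nonempty finite set β ⊆ ℕ such that a + P(∑_{t∈β} x_t) ∈ A for all P ∈ F. -/
/-!
PET induction with color focusing, in a finitary form for colorings of `ℤ`. Order finite families
of polynomials without constant term by their PET weight (the number of distinct leading
coefficients in each degree, compared from the top degree down). For `p₀ ∈ F` of least degree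
and shifts `s`, the derived polynomials `p(t + s) - p(s) - p₀(t)` form a family of smaller weight.
A focus `f` with colors `C` carries index sets `B c` such that all `f + p(x_{B c})` have color
`c ≠ χ f`. A monochromatic derived configuration at `b`, `γ` for the coloring
`w ↦ (χ (w + o))_{|o| ≤ N}` moves each of these configurations to the new focus
`f + b - p₀(x_γ)` with index set `B c ∪ γ`, and adds the color `χ (b + f)` with index set `γ`.
After as many steps as there are colors, the focus has the color of one of its configurations,
which is then a monochromatic pattern. A piecewise syndetic set colors a long interval by which of
finitely many shifts lands in it.
-/

open Polynomial

/-- A polynomial over ℤ is admissible if it has zero constant term and maps ℕ into ℕ. -/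
def IsAdmissible (P : Polynomial ℤ) : Prop :=
  P.eval 0 = 0 ∧ ∀ n : ℕ, 0 ≤ P.eval (n : ℤ)

/-- A ⊆ ℕ is a J_p-set. -/
def JpSet (A : Set ℕ) : Prop :=
  ∀ F : Finset (Polynomial ℤ), (∀ P ∈ F, IsAdmissible P) →
  ∀ l : ℕ, ∀ x : Fin l → ℕ → ℕ,
  ∃ a : ℕ, ∃ β : Finset ℕ, β.Nonempty ∧
    ∀ P ∈ F, ∀ i : Fin l,
      ((a : ℤ) + P.eval ((∑ t ∈ β, x i t : ℕ) : ℤ)).toNat ∈ A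

/-- A ⊆ ℕ is piecewise syndetic. -/
def PiecewiseSyndetic (A : Set ℕ) : Prop :=
  ∃ G : Finset ℕ, ∀ n : ℕ, ∃ m : ℕ, ∀ k < n, ∃ g ∈ G, (m + k) + g ∈ A

open Finset

theorem Finsupp.toColex_lt_of_apply_lt {α N : Type*} [LinearOrder α] [LinearOrder N] [Zero N]
    {f g : α →₀ N} {d : α} (hd : f d < g d) (h : ∀ e, d < e → f e ≤ g e) :
    toColex f < toColex g := by
  by_contra hfg
  rcases (not_lt.mp hfg).lt_or_eq with hgf | hgf
  · obtain ⟨i, hi, hgi⟩ := Finsupp.Colex.lt_iff.mp hgf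
    rcases lt_trichotomy i d with hid | rfl | hdi
    · exact hd.ne' (hi d hid)
    · exact lt_asymm hd hgi
    · exact (h i hdi).not_gt hgi
  · exact hd.ne' (by rw [toColex_inj.mp hgf])

namespace IPPolyVdW

noncomputable section

section PET

variable {R : Type*} [CommRing R]

def derivedPoly (p₀ : R[X]) (s : R) (p : R[X]) : R[X] :=
  taylor s p - C (p.eval s) - p₀

def derivedFamily [DecidableEq R] (p₀ : R[X]) (S : Finset R) (F : Finset R[X]) : Finset R[X] :=
  (S ×ˢ F).image fun sp => derivedPoly p₀ sp.1 sp.2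

theorem eval_derivedPoly (p₀ p : R[X]) (s t : R) :
    (derivedPoly p₀ s p).eval t = p.eval (t + s) - p.eval s - p₀.eval t := by
  simp [derivedPoly, taylor_eval]

theorem natDegree_derivedPoly_le (p₀ p : R[X]) (s : R) :
    (derivedPoly p₀ s p).natDegree ≤ max p.natDegree p₀.natDegree := by
  simpa [derivedPoly, natDegree_sub_C, natDegree_taylor] using
    natDegree_sub_le (taylor s p - C (p.eval s)) p₀

theorem coeff_derivedPoly_natDegree (p₀ : R[X]) {p : R[X]} (s : R) (hp : 0 < p.natDegree) :
    (derivedPoly p₀ s p).coeff p.natDegree = p.leadingCoeff - p₀.coeff p.natDegree := by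
  rw [derivedPoly, coeff_sub, coeff_sub, coeff_C, if_neg hp.ne', sub_zero,
    coeff_taylor_natDegree]

theorem derivedFamily_eval_zero [DecidableEq R] {p₀ : R[X]} (hp₀ : p₀.eval 0 = 0)
    (S : Finset R) (F : Finset R[X]) : ∀ q ∈ derivedFamily p₀ S F, q.eval 0 = 0 := by
  simp only [derivedFamily, mem_image]
  rintro _ ⟨⟨s, p⟩, -, rfl⟩
  rw [eval_derivedPoly, zero_add, hp₀]
  ring

variable [DecidableEq R]

def leadingCoeffsOfDegree (F : Finset R[X]) (e : ℕ) : Finset R :=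
  {p ∈ F | p.degree = (e : WithBot ℕ)}.image leadingCoeff

def petWeight (F : Finset R[X]) : ℕ →₀ ℕ :=
  Finsupp.onFinset (F.image natDegree) (fun e => #(leadingCoeffsOfDegree F e)) fun e he => by
    obtain ⟨_, hc⟩ := card_ne_zero.mp he
    obtain ⟨p, hp, -⟩ := mem_image.mp hc
    rw [mem_filter] at hp
    exact mem_image.mpr ⟨p, hp.1, natDegree_eq_of_degree_eq_some hp.2⟩

theorem petWeight_apply (F : Finset R[X]) (e : ℕ) :
    petWeight F e = #(leadingCoeffsOfDegree F e) := rfl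

theorem petWeight_erase_zero (F : Finset R[X]) : petWeight (F.erase 0) = petWeight F := by
  ext e
  simp [petWeight_apply, leadingCoeffsOfDegree, filter_erase]

theorem leadingCoeffsOfDegree_derivedFamily_subset {F : Finset R[X]} {p₀ : R[X]} (S : Finset R)
    (hF : ∀ p ∈ F, 0 < p.natDegree) (hmin : ∀ p ∈ F, p₀.natDegree ≤ p.natDegree) {e : ℕ}
    (he : p₀.natDegree ≤ e) :
    leadingCoeffsOfDegree (derivedFamily p₀ S F) e ⊆
      ((leadingCoeffsOfDegree F e).image (· - p₀.coeff e)).erase 0 := by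
  intro c hc
  simp only [leadingCoeffsOfDegree, derivedFamily, mem_image, mem_filter, mem_product] at hc
  obtain ⟨_, ⟨⟨⟨s, p⟩, ⟨-, hp⟩, rfl⟩, hqe⟩, rfl⟩ := hc
  set q := derivedPoly p₀ s p
  have hq : q ≠ 0 := by rintro h; simp [h] at hqe
  have hqn : q.natDegree = e := natDegree_eq_of_degree_eq_some hqe
  have hcoeff := coeff_derivedPoly_natDegree p₀ s (hF p hp)
  have hpe : p.natDegree = e := by
    refine le_antisymm ?_ <|
      hqn ▸ (natDegree_derivedPoly_le p₀ p s).trans (max_le le_rfl (hmin p hp))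
    by_contra! hlt
    have hq0 : q.coeff p.natDegree = 0 := coeff_eq_zero_of_natDegree_lt (hqn ▸ hlt)
    rw [hcoeff, coeff_eq_zero_of_natDegree_lt (he.trans_lt hlt), sub_zero] at hq0
    exact (ne_zero_of_natDegree_gt (hF p hp)) (leadingCoeff_eq_zero.mp hq0)
  refine mem_erase.mpr ⟨leadingCoeff_ne_zero.mpr hq, mem_image.mpr ⟨p.leadingCoeff, ?_, ?_⟩⟩
  · exact mem_image.mpr ⟨p, mem_filter.mpr ⟨hp, (degree_eq_iff_natDegree_eq
      (ne_zero_of_natDegree_gt (hF p hp))).mpr hpe⟩, rfl⟩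
  · rw [eq_comm, leadingCoeff, hqn, ← hpe, hcoeff]

theorem petWeight_derivedFamily_lt {F : Finset R[X]} {p₀ : R[X]} (S : Finset R)
    (hF : ∀ p ∈ F, 0 < p.natDegree) (hp₀ : p₀ ∈ F) (hmin : ∀ p ∈ F, p₀.natDegree ≤ p.natDegree) :
    toColex (petWeight (derivedFamily p₀ S F)) < toColex (petWeight F) := by
  refine Finsupp.toColex_lt_of_apply_lt (d := p₀.natDegree) ?_ fun e he => ?_
  · have hc₀ : p₀.leadingCoeff ∈ leadingCoeffsOfDegree F p₀.natDegree :=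
      mem_image_of_mem _ <| mem_filter.mpr
        ⟨hp₀, degree_eq_natDegree (ne_zero_of_natDegree_gt (hF p₀ hp₀))⟩
    rw [petWeight_apply, petWeight_apply]
    calc _ ≤ #(((leadingCoeffsOfDegree F p₀.natDegree).image (· - p₀.leadingCoeff)).erase 0) :=
          card_le_card (leadingCoeffsOfDegree_derivedFamily_subset S hF hmin le_rfl)
      _ < #((leadingCoeffsOfDegree F p₀.natDegree).image (· - p₀.leadingCoeff)) :=
          card_erase_lt_of_mem (mem_image.mpr ⟨_, hc₀, sub_self _⟩)
      _ ≤ _ := card_image_le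
  · rw [petWeight_apply, petWeight_apply]
    refine (card_le_card (leadingCoeffsOfDegree_derivedFamily_subset S hF hmin he.le)).trans ?_
    refine (card_erase_le).trans ?_
    rw [coeff_eq_zero_of_natDegree_lt he]
    simp

end PET

section Patterns

variable {κ : Type}

def PointsColored (χ : ℤ → κ) (F : Finset ℤ[X]) (x : ℕ → ℤ) (N : ℕ) (a : ℤ) (β : Finset ℕ)
    (c : κ) : Prop :=
  ∀ p ∈ F, (a + p.eval (∑ t ∈ β, x t)).natAbs ≤ N ∧ χ (a + p.eval (∑ t ∈ β, x t)) = c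

def HasPattern (χ : ℤ → κ) (F : Finset ℤ[X]) (x : ℕ → ℤ) (M L N : ℕ) : Prop :=
  ∃ a : ℤ, ∃ β : Finset ℕ, β.Nonempty ∧ β ⊆ Ico M L ∧ a.natAbs ≤ N ∧
    PointsColored χ F x N a β (χ a)

def IsFocus (χ : ℤ → κ) (F : Finset ℤ[X]) (x : ℕ → ℤ) (M L N : ℕ) (C : Finset κ) (f : ℤ) :
    Prop :=
  f.natAbs ≤ N ∧ χ f ∉ C ∧ ∃ B : κ → Finset ℕ,
    ∀ c ∈ C, (B c).Nonempty ∧ B c ⊆ Ico M L ∧ PointsColored χ F x N f (B c) c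

def windowColoring (χ : ℤ → κ) (N : ℕ) (w : ℤ) : Icc (-N : ℤ) N → κ :=
  fun o => χ (w + o)

end Patterns

def FinitaryIPVdW (F : Finset ℤ[X]) : Prop :=
  ∀ (κ : Type) [Fintype κ] (x : ℕ → ℤ) (M : ℕ),
    ∃ L N : ℕ, M ≤ L ∧ ∀ χ : ℤ → κ, HasPattern χ F x M L N

def ipSums (x : ℕ → ℤ) (M L : ℕ) : Finset ℤ :=
  (Ico M L).powerset.image fun β => ∑ t ∈ β, x t

section Focusing

variable {κ : Type} {χ : ℤ → κ} {F : Finset ℤ[X]} {x : ℕ → ℤ} {p₀ : ℤ[X]}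
  {M L₁ L₂ N₁ N₂ N V : ℕ} {b f : ℤ} {β γ : Finset ℕ} {c : κ} {C : Finset κ}

theorem pointsColored_empty (h0 : ∀ p ∈ F, p.eval 0 = 0) (hf : f.natAbs ≤ N) :
    PointsColored χ F x N f ∅ (χ f) := by
  intro p hp
  simp [h0 p hp, hf]

theorem HasPattern.of_shift (h : HasPattern (fun z => χ (b + z)) F x M L₁ N₁)
    (hb : b.natAbs ≤ N₂) (hL : L₁ ≤ L₂) (hN : N₁ + N₂ ≤ N) : HasPattern χ F x M L₂ N := by
  obtain ⟨a, β, hβ, hβL, ha, hpts⟩ := h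
  refine ⟨b + a, β, hβ, hβL.trans (Ico_subset_Ico_right hL), by omega, fun p hp => ?_⟩
  obtain ⟨hbound, hcolor⟩ := hpts p hp
  rw [add_assoc]
  exact ⟨by omega, hcolor⟩

theorem PointsColored.union (hpts : PointsColored (fun z => χ (b + z)) F x N₁ f β c)
    (hβ : β ⊆ Ico M L₁)
    (hder : PointsColored (windowColoring χ N₁) (derivedFamily p₀ (ipSums x M L₁) F) x N₂ b γ
      (windowColoring χ N₁ b))
    (hγ : γ ⊆ Ico L₁ L₂) (hN : N₁ + N₂ ≤ N) :
    PointsColored χ F x N (f + b - p₀.eval (∑ t ∈ γ, x t)) (β ∪ γ) c := by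
  intro p hp
  have hs : ∑ t ∈ β, x t ∈ ipSums x M L₁ := mem_image_of_mem _ (mem_powerset.mpr hβ)
  obtain ⟨hq, hqχ⟩ := hder (derivedPoly p₀ (∑ t ∈ β, x t) p)
    (mem_image.mpr ⟨(_, p), mem_product.mpr ⟨hs, hp⟩, rfl⟩)
  obtain ⟨ho, hoχ⟩ := hpts p hp
  set s := ∑ t ∈ β, x t
  set t := ∑ t ∈ γ, x t
  have hsum : ∑ i ∈ β ∪ γ, x i = t + s := by
    rw [sum_union ((Ico_disjoint_Ico_consecutive M L₁ L₂).mono hβ hγ), add_comm]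
  have key : f + b - p₀.eval t + p.eval (t + s) =
      b + (derivedPoly p₀ s p).eval t + (f + p.eval s) := by
    rw [eval_derivedPoly]; ring
  rw [hsum, key]
  refine ⟨by omega, ?_⟩
  have := congrFun hqχ ⟨f + p.eval s, mem_Icc.mpr (by omega)⟩
  simp only [windowColoring] at this
  rw [this, ← hoχ]

theorem IsFocus.extend (hfoc : IsFocus (fun z => χ (b + z)) F x M L₁ N₁ C f)
    (hder : PointsColored (windowColoring χ N₁) (derivedFamily p₀ (ipSums x M L₁) F) x N₂ b γ
      (windowColoring χ N₁ b))
    (hb : b.natAbs ≤ N₂) (hγ : γ.Nonempty) (hγL : γ ⊆ Ico L₁ L₂) (hML : M ≤ L₁) (hL : L₁ ≤ L₂)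
    (h0 : ∀ p ∈ F, p.eval 0 = 0) (hV : (p₀.eval (∑ t ∈ γ, x t)).natAbs ≤ V) :
    HasPattern χ F x M L₂ (N₁ + N₂ + V) ∨
      ∃ C' f', #C' = #C + 1 ∧ IsFocus χ F x M L₂ (N₁ + N₂ + V) C' f' := by
  classical
  obtain ⟨hf, hfC, B, hB⟩ := hfoc
  set f' := f + b - p₀.eval (∑ t ∈ γ, x t)
  set c' := χ (b + f)
  -- the new color `c'` takes `f` itself as its old point: `B = ∅` and `p(0) = 0`
  set B' : κ → Finset ℕ := fun c => (if c = c' then ∅ else B c) ∪ γ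
  have hB' : ∀ c ∈ insert c' C, (B' c).Nonempty ∧ B' c ⊆ Ico M L₂ ∧
      PointsColored χ F x (N₁ + N₂ + V) f' (B' c) c := by
    intro c hc
    have hold : (if c = c' then ∅ else B c) ⊆ Ico M L₁ ∧
        PointsColored (fun z => χ (b + z)) F x N₁ f (if c = c' then ∅ else B c) c := by
      split_ifs with h
      · exact ⟨empty_subset _, h ▸ pointsColored_empty h0 hf⟩
      · exact (hB c ((mem_insert.mp hc).resolve_left h)).2
    refine ⟨hγ.mono subset_union_right, union_subset ?_ (hγL.trans (Ico_subset_Ico_left hML)),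
      hold.2.union hold.1 hder hγL (by omega)⟩
    exact hold.1.trans (Ico_subset_Ico_right hL)
  have hf' : f'.natAbs ≤ N₁ + N₂ + V := by omega
  by_cases hwin : χ f' ∈ insert c' C
  · obtain ⟨hne, hsub, hpts⟩ := hB' _ hwin
    exact Or.inl ⟨f', B' (χ f'), hne, hsub, hf', hpts⟩
  · exact Or.inr ⟨insert c' C, f', card_insert_of_notMem hfC, hf', hwin, B', hB'⟩

theorem exists_pattern_or_focus [Fintype κ] (h0 : ∀ p ∈ F, p.eval 0 = 0)
    (hderived : ∀ S, FinitaryIPVdW (derivedFamily p₀ S F)) (x : ℕ → ℤ) (u M : ℕ) :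
    ∃ L N, M ≤ L ∧ ∀ χ : ℤ → κ,
      HasPattern χ F x M L N ∨ ∃ C f, #C = u ∧ IsFocus χ F x M L N C f := by
  induction u generalizing M with
  | zero => exact ⟨M, 0, le_rfl, fun χ => Or.inr ⟨∅, 0, rfl, by simp [IsFocus]⟩⟩
  | succ u ih =>
    obtain ⟨L₁, N₁, hML₁, H₁⟩ := ih M
    obtain ⟨L₂, N₂, hL₁₂, H₂⟩ := hderived (ipSums x M L₁) (Icc (-N₁ : ℤ) N₁ → κ) x L₁
    set V := (Ico L₁ L₂).powerset.sup fun γ => (p₀.eval (∑ t ∈ γ, x t)).natAbs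
    refine ⟨L₂, N₁ + N₂ + V, hML₁.trans hL₁₂, fun χ => ?_⟩
    obtain ⟨b, γ, hγ, hγL, hb, hder⟩ := H₂ (windowColoring χ N₁)
    rcases H₁ (fun z => χ (b + z)) with hwin | ⟨C, f, rfl, hfoc⟩
    · exact Or.inl (hwin.of_shift hb hL₁₂ (by omega))
    · exact hfoc.extend hder hb hγ hγL hML₁ hL₁₂ h0
        (le_sup (f := fun γ => (p₀.eval (∑ t ∈ γ, x t)).natAbs) (mem_powerset.mpr hγL))

theorem finitaryIPVdW_of_derivedFamily (p₀ : ℤ[X]) (h0 : ∀ p ∈ F, p.eval 0 = 0)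
    (hderived : ∀ S, FinitaryIPVdW (derivedFamily p₀ S F)) : FinitaryIPVdW F := by
  intro κ _ x M
  obtain ⟨L, N, hML, H⟩ := exists_pattern_or_focus (κ := κ) h0 hderived x (Fintype.card κ) M
  refine ⟨L, N, hML, fun χ => (H χ).resolve_right ?_⟩
  rintro ⟨C, f, hC, -, hfC, -⟩
  exact hfC (eq_univ_of_card C hC ▸ mem_univ _)

end Focusing

theorem finitaryIPVdW_empty : FinitaryIPVdW ∅ := fun _ _ _ M =>
  ⟨M + 1, 0, by omega, fun _ => ⟨0, {M}, by simp, by simp, by simp, by simp [PointsColored]⟩⟩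

theorem FinitaryIPVdW.of_erase_zero {F : Finset ℤ[X]} (h : FinitaryIPVdW (F.erase 0)) :
    FinitaryIPVdW F := by
  intro κ _ x M
  obtain ⟨L, N, hML, H⟩ := h κ x M
  refine ⟨L, N, hML, fun χ => ?_⟩
  obtain ⟨a, β, hβ, hβL, ha, hpts⟩ := H χ
  refine ⟨a, β, hβ, hβL, ha, fun p hp => ?_⟩
  rcases eq_or_ne p 0 with rfl | hp0
  · simpa using ha
  · exact hpts p (mem_erase.mpr ⟨hp0, hp⟩)

theorem finitaryIPVdW (F : Finset ℤ[X]) (h0 : ∀ p ∈ F, p.eval 0 = 0) : FinitaryIPVdW F := by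
  induction hw : toColex (petWeight F) using WellFoundedLT.induction generalizing F with
  | ind w IH =>
  subst hw
  apply FinitaryIPVdW.of_erase_zero
  obtain hF | hF := (F.erase 0).eq_empty_or_nonempty
  · exact hF ▸ finitaryIPVdW_empty
  obtain ⟨p₀, hp₀, hmin⟩ := exists_min_image _ natDegree hF
  have hpos : ∀ p ∈ F.erase 0, 0 < p.natDegree := fun p hp =>
    natDegree_pos_of_eval₂_root (ne_of_mem_erase hp) (RingHom.id ℤ) (h0 p (mem_of_mem_erase hp))
      fun _ => id
  refine finitaryIPVdW_of_derivedFamily p₀ (fun p hp => h0 p (mem_of_mem_erase hp))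
    fun S => IH _ ?_ _ (derivedFamily_eval_zero (h0 p₀ (mem_of_mem_erase hp₀)) S _) rfl
  rw [← petWeight_erase_zero F]
  exact petWeight_derivedFamily_lt S hpos hp₀ hmin

end

end IPPolyVdW

theorem PiecewiseSyndetic.exists_coloring {A : Set ℕ} (hA : PiecewiseSyndetic A) :
    ∃ G : Finset ℕ, ∀ N : ℕ, ∃ m : ℕ, ∃ χ : ℤ → G,
      ∀ z : ℤ, z.natAbs ≤ N → m + (z + N).toNat + χ z ∈ A := by
  obtain ⟨G, hG⟩ := hA
  refine ⟨G, fun N => ?_⟩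
  obtain ⟨m, hm⟩ := hG (2 * N + 1)
  have hχ : ∀ z : ℤ, ∃ g : G, z.natAbs ≤ N → m + (z + N).toNat + g ∈ A := by
    intro z
    by_cases hz : z.natAbs ≤ N
    · obtain ⟨g, hg, hgA⟩ := hm (z + N).toNat (by omega)
      exact ⟨⟨g, hg⟩, fun _ => hgA⟩
    · obtain ⟨g, hg, -⟩ := hm 0 (by omega)
      exact ⟨⟨g, hg⟩, fun h => absurd h hz⟩
  choose χ hχ using hχ
  exact ⟨m, χ, hχ⟩

theorem ip_polynomial_vdw_single (A : Set ℕ) (hA : PiecewiseSyndetic A)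
    (F : Finset (Polynomial ℤ)) (hF : ∀ P ∈ F, IsAdmissible P)
    (x : ℕ → ℕ) :
    ∃ a : ℕ, ∃ β : Finset ℕ, β.Nonempty ∧
      ∀ P ∈ F, ((a : ℤ) + P.eval ((∑ t ∈ β, x t : ℕ) : ℤ)).toNat ∈ A := by
  obtain ⟨G, hG⟩ := hA.exists_coloring
  obtain ⟨L, N, -, H⟩ :=
    IPPolyVdW.finitaryIPVdW F (fun P hP => (hF P hP).1) G (fun t => (x t : ℤ)) 0
  obtain ⟨m, χ, hχ⟩ := hG N
  obtain ⟨a, β, hβ, -, ha, hpts⟩ := H χ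
  refine ⟨m + (a + N).toNat + χ a, β, hβ, fun P hP => ?_⟩
  obtain ⟨hPN, hPχ⟩ := hpts P hP
  beta_reduce at hPN hPχ
  have hmem := hχ _ hPN
  rw [hPχ] at hmem
  rw [Nat.cast_sum]
  convert hmem using 1
  omega
end

section
/- If A ⊆ ℕ is a J_p-set and n is a nonzero integer (say n ∈ ℕ, n ≥ 1), then n·A = {n·a : a ∈ A} is a J_p-set. -/
open Polynomial

/-!
Split the sequences `x i` into consecutive blocks `[φ t, φ (t + 1))` whose sums are all divisible
by `n` (pigeonhole on the partial sums modulo `n`), and let `w i t` be the `t`-th block sum divided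
by `n`. A finite union of blocks then has sum `n * ∑_{t ∈ β} w i t`. Applying the `J_p` property of
`A` to the sequences `w i` and the admissible polynomials `Q(y) = P(n y) / n` gives `a, β` with
`a + Q(∑_{t ∈ β} w i t) ∈ A`; multiplying by `n`, the shift `n a` and the union of the blocks
indexed by `β` witness the `J_p` property of `n A`.
-/

open Finset Filter

theorem exists_strictMono_sum_Ico_eq_zero {G : Type*} [AddCommGroup G] [Finite G] (f : ℕ → G) :
    ∃ φ : ℕ → ℕ, StrictMono φ ∧ ∀ t, ∑ j ∈ Ico (φ t) (φ (t + 1)), f j = 0 := by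
  obtain ⟨v, hv⟩ := Finite.exists_infinite_fiber fun m => ∑ j ∈ range m, f j
  obtain ⟨φ, hφ, hφv⟩ := extraction_of_frequently_atTop
    (Nat.frequently_atTop_iff_infinite.2 (Set.infinite_coe_iff.1 hv))
  refine ⟨φ, hφ, fun t => ?_⟩
  rw [sum_Ico_eq_sub _ (hφ.monotone t.le_succ)]
  exact sub_eq_zero.2 ((hφv (t + 1)).trans (hφv t).symm)

theorem exists_strictMono_dvd_sum_Ico {ι : Type*} [Finite ι] (x : ι → ℕ → ℕ) {n : ℕ}
    (hn : n ≠ 0) :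
    ∃ φ : ℕ → ℕ, StrictMono φ ∧ ∀ i t, n ∣ ∑ j ∈ Ico (φ t) (φ (t + 1)), x i j := by
  have : NeZero n := ⟨hn⟩
  obtain ⟨φ, hφ, hsum⟩ := exists_strictMono_sum_Ico_eq_zero fun j i => (x i j : ZMod n)
  refine ⟨φ, hφ, fun i t => (ZMod.natCast_eq_zero_iff _ _).1 ?_⟩
  simpa only [Nat.cast_sum, Finset.sum_apply, Pi.zero_apply] using congrFun (hsum t) i

theorem sum_biUnion_Ico {M : Type*} [AddCommMonoid M] {φ : ℕ → ℕ} (hφ : Monotone φ)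
    (β : Finset ℕ) (f : ℕ → M) :
    ∑ j ∈ β.biUnion (fun t => Ico (φ t) (φ (t + 1))), f j =
      ∑ t ∈ β, ∑ j ∈ Ico (φ t) (φ (t + 1)), f j := by
  refine sum_biUnion fun s _ t _ hst => ?_
  simpa only [← disjoint_coe, coe_Ico, Function.onFun, Order.succ_eq_add_one] using
    hφ.pairwise_disjoint_on_Ico_succ hst

/-- For `P(0) = 0` this is the polynomial `y ↦ P(n y) / n`. -/
noncomputable def scaleDown {R : Type*} [CommSemiring R] (n : R) (P : R[X]) : R[X] :=
  X * P.divX.comp (C n * X)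

theorem eval_eq_mul_eval_divX {R : Type*} [CommSemiring R] {P : R[X]} (hP : P.eval 0 = 0)
    (y : R) : P.eval y = y * P.divX.eval y := by
  conv_lhs => rw [← X_mul_divX_add P]
  simp [coeff_zero_eq_eval_zero, hP]

theorem mul_eval_scaleDown {R : Type*} [CommSemiring R] {P : R[X]} (hP : P.eval 0 = 0)
    (n y : R) : n * (scaleDown n P).eval y = P.eval (n * y) := by
  rw [eval_eq_mul_eval_divX hP, scaleDown]
  simp only [eval_mul, eval_X, eval_comp, eval_C]
  ring

theorem isAdmissible_scaleDown {P : ℤ[X]} (hP : IsAdmissible P) {n : ℕ} (hn : 0 < n) :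
    IsAdmissible (scaleDown (n : ℤ) P) := by
  refine ⟨by simp [scaleDown], fun m => ?_⟩
  have hnm : 0 ≤ (n : ℤ) * (scaleDown (n : ℤ) P).eval (m : ℤ) := by
    rw [mul_eval_scaleDown hP.1]
    exact_mod_cast hP.2 (n * m)
  exact (mul_nonneg_iff_of_pos_left (by exact_mod_cast hn)).1 hnm

theorem toNat_mul_add_eval_mul {P : ℤ[X]} (hP : IsAdmissible P) {n : ℕ}
    (hn : 0 < n) (a u : ℕ) :
    (((n * a : ℕ) : ℤ) + P.eval ((n * u : ℕ) : ℤ)).toNat =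
      n * ((a : ℤ) + (scaleDown (n : ℤ) P).eval (u : ℤ)).toNat := by
  have hnonneg : 0 ≤ (a : ℤ) + (scaleDown (n : ℤ) P).eval (u : ℤ) :=
    add_nonneg (Nat.cast_nonneg a) ((isAdmissible_scaleDown hP hn).2 u)
  have hscaled : ((n * a : ℕ) : ℤ) + P.eval ((n * u : ℕ) : ℤ) =
      ((n * ((a : ℤ) + (scaleDown (n : ℤ) P).eval (u : ℤ)).toNat : ℕ) : ℤ) := by
    push_cast
    rw [Int.toNat_of_nonneg hnonneg, mul_add, mul_eval_scaleDown hP.1]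
  rw [hscaled, Int.toNat_natCast]

theorem jpSet_mul (A : Set ℕ) (hA : JpSet A) (n : ℕ) (hn : 1 ≤ n) :
    JpSet ((fun a => n * a) '' A) := by
  intro F hF l x
  obtain ⟨φ, hφ, hdvd⟩ := exists_strictMono_dvd_sum_Ico x (n := n) (by omega)
  choose w hw using hdvd
  obtain ⟨a, β, hβ, hmem⟩ := hA (F.image (scaleDown (n : ℤ)))
    (by simpa using fun P hP => isAdmissible_scaleDown (hF P hP) hn) l w
  refine ⟨n * a, β.biUnion fun t => Ico (φ t) (φ (t + 1)),
    hβ.biUnion fun t _ => nonempty_Ico.2 (hφ t.lt_succ_self), fun P hP i => ?_⟩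
  rw [sum_biUnion_Ico hφ.monotone]
  simp only [hw, ← mul_sum]
  rw [toNat_mul_add_eval_mul (hF P hP) hn]
  exact ⟨_, hmem _ (mem_image_of_mem _ hP) i, rfl⟩
end

section
/- If A ⊆ ℕ is a C_p-set and n ∈ ℕ with n ≥ 1, then n⁻¹·A = {x ∈ ℕ : n·x ∈ A} is a C_p-set. -/
open Polynomial

/-- Addition on βℕ: A ∈ p + q iff {x : {y : x + y ∈ A} ∈ q} ∈ p. -/
def ufAdd (p q : Ultrafilter ℕ) : Ultrafilter ℕ :=
  p.bind fun x => q.map (x + ·)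

/-- The set 𝒥_p of ultrafilters all of whose members are J_p-sets. -/
def JpUF : Set (Ultrafilter ℕ) := {p | ∀ A ∈ p, JpSet A}

def IsLeftIdeal (L : Set (Ultrafilter ℕ)) : Prop :=
  L.Nonempty ∧ ∀ p ∈ L, ∀ q : Ultrafilter ℕ, ufAdd q p ∈ L

def IsMinimalLeftIdeal (L : Set (Ultrafilter ℕ)) : Prop :=
  IsLeftIdeal L ∧ ∀ L' : Set (Ultrafilter ℕ), IsLeftIdeal L' → L' ⊆ L → L' = L

def IsTwoSidedIdeal (I : Set (Ultrafilter ℕ)) : Prop :=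
  I.Nonempty ∧ ∀ p ∈ I, ∀ q : Ultrafilter ℕ, ufAdd p q ∈ I ∧ ufAdd q p ∈ I

/-- The smallest two-sided ideal K(βℕ,+). -/
def smallestIdeal : Set (Ultrafilter ℕ) := ⋂₀ {I | IsTwoSidedIdeal I}

/-- A set is central if it belongs to a minimal idempotent, i.e. an idempotent
lying in the smallest ideal K(βℕ,+). -/
def IsCentralSet (A : Set ℕ) : Prop :=
  ∃ p ∈ smallestIdeal, ufAdd p p = p ∧ A ∈ p

/-- A set is a C_p-set if it belongs to an idempotent ultrafilter in 𝒥_p. -/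
def CpSet (A : Set ℕ) : Prop :=
  ∃ p : Ultrafilter ℕ, ufAdd p p = p ∧ (∀ B ∈ p, JpSet B) ∧ A ∈ p

/-!
An idempotent ultrafilter `p` contains `nℕ`: its image in `ZMod n` is an idempotent principal
ultrafilter, hence `pure 0`. So `p` is the pushforward, under the injective additive map
`x ↦ n * x`, of its pullback `q`, which is therefore idempotent as well, and `n⁻¹A ∈ q`.
Every member `B` of `q` is a J_p-set because `nB` is: the J_p property of `nB` for the
polynomials `nP` yields a shift divisible by `n`.
-/

lemma mem_ufAdd {p q : Ultrafilter ℕ} {s : Set ℕ} :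
    s ∈ ufAdd p q ↔ {x | {y | x + y ∈ s} ∈ q} ∈ p := by
  simp [ufAdd, Ultrafilter.bind]
  rfl

lemma map_ufAdd {f : ℕ → ℕ} (hf : ∀ x y, f (x + y) = f x + f y) (p q : Ultrafilter ℕ) :
    (ufAdd p q).map f = ufAdd (p.map f) (q.map f) := by
  ext s
  simp only [Ultrafilter.mem_map, mem_ufAdd, Set.preimage_ofPred_eq, Set.mem_preimage, hf]

lemma Ultrafilter.map_injective {α β : Type*} {f : α → β} (hf : Function.Injective f) :
    Function.Injective (Ultrafilter.map f) := fun p q h => by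
  apply Ultrafilter.coe_injective
  rw [← Filter.comap_map hf (f := (p : Filter α)), ← Filter.comap_map hf (f := (q : Filter α)),
    ← Ultrafilter.coe_map, ← Ultrafilter.coe_map, h]

lemma range_mul_mem_of_ufAdd_self {p : Ultrafilter ℕ} (hp : ufAdd p p = p) {n : ℕ} (hn : n ≠ 0) :
    Set.range (n * ·) ∈ p := by
  have : NeZero n := ⟨hn⟩
  obtain ⟨c, hc⟩ := (p.map (Nat.cast : ℕ → ZMod n)).eq_pure_of_finite
  have hres : {x : ℕ | (x : ZMod n) = c} ∈ p :=
    show {c} ∈ p.map (Nat.cast : ℕ → ZMod n) from hc ▸ rfl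
  -- Idempotence of `p` descends to its image `pure c` in `ZMod n`, forcing `c + c = c`.
  have hsum : {x | {y | x + y ∈ {x : ℕ | (x : ZMod n) = c}} ∈ p} ∈ p := by
    rw [← mem_ufAdd, hp]; exact hres
  obtain ⟨x, hx, hxc⟩ := Ultrafilter.nonempty_of_mem (Filter.inter_mem hsum hres)
  obtain ⟨y, hxy, hyc⟩ := Ultrafilter.nonempty_of_mem (Filter.inter_mem hx hres)
  have hc0 : c = 0 := by
    simp only [Set.mem_ofPred_eq, Nat.cast_add] at hxy hxc hyc
    rw [hxc, hyc] at hxy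
    exact left_eq_add.mp hxy.symm
  convert hres using 1
  ext x
  simp [hc0, ZMod.natCast_eq_zero_iff, dvd_def, eq_comm]

lemma IsAdmissible.const_mul {P : ℤ[X]} (hP : IsAdmissible P) (n : ℕ) :
    IsAdmissible (C (n : ℤ) * P) :=
  ⟨by simp [hP.1], fun m => by simpa using mul_nonneg (Int.natCast_nonneg n) (hP.2 m)⟩

lemma jpSet_of_jpSet_image_mul {B : Set ℕ} {n : ℕ} (hn : n ≠ 0) (h : JpSet ((n * ·) '' B)) :
    JpSet B := by
  intro F hF l x
  -- Adjoining the polynomial `0` (and a sequence, in case `l = 0`) forces `n ∣ a'`.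
  obtain ⟨a', β, hβ, hmem⟩ := h ((insert 0 F).image (C (n : ℤ) * ·))
    (by
      simp only [Finset.mem_image, Finset.mem_insert]
      rintro _ ⟨P, rfl | hP, rfl⟩
      exacts [IsAdmissible.const_mul ⟨by simp, by simp⟩ n, (hF P hP).const_mul n])
    (l + 1) (Fin.cons (fun _ => 0) x)
  obtain ⟨a, rfl⟩ : n ∣ a' := by
    obtain ⟨b, -, hb⟩ := hmem (C (n : ℤ) * 0) (by simp) 0
    exact ⟨b, by simpa using hb.symm⟩
  refine ⟨a, β, hβ, fun P hP i => ?_⟩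
  obtain ⟨b, hb, hbeq⟩ := 
    hmem (C (n : ℤ) * P) (Finset.mem_image_of_mem _ (Finset.mem_insert_of_mem hP)) i.succ
  have hpos := (hF P hP).2 (∑ t ∈ β, x i t)
  simp only [Fin.cons_succ, eval_mul, eval_C] at hbeq
  rw [Nat.cast_mul, ← mul_add, Int.toNat_mul (by positivity) (by positivity),
    Int.toNat_natCast] at hbeq
  rwa [← Nat.eq_of_mul_eq_mul_left (Nat.pos_of_ne_zero hn) hbeq]

theorem cpSet_div (A : Set ℕ) (hA : CpSet A) (n : ℕ) (hn : 1 ≤ n) :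
    CpSet {x : ℕ | n * x ∈ A} := by
  obtain ⟨p, hidem, hjp, hAp⟩ := hA
  have hn0 : n ≠ 0 := Nat.one_le_iff_ne_zero.mp hn
  have hinj : Function.Injective (n * ·) := mul_right_injective₀ hn0
  have hrange : Set.range (n * ·) ∈ p := range_mul_mem_of_ufAdd_self hidem hn0
  set q := p.comap hinj hrange
  have hpq : q.map (n * ·) = p := Ultrafilter.coe_injective (Filter.map_comap_of_mem hrange)
  refine ⟨q, Ultrafilter.map_injective hinj ?_, fun B hB => ?_, ?_⟩
  · rw [map_ufAdd (fun x y => mul_add n x y), hpq, hidem]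
  · exact jpSet_of_jpSet_image_mul hn0 (hjp _ ((Ultrafilter.mem_comap _ _ _).mp hB))
  · rw [Ultrafilter.mem_comap]
    exact Set.image_preimage_eq_inter_range (f := (n * ·)) ▸ Filter.inter_mem hAp hrange
end

section
/- Every subset of ℕ with positive upper Banach density is a J_p-set, assuming the multidimensional IP polynomial Szemerédi theorem. -/
/-! Substituting `X i` into each `P ∈ F` gives admissible polynomials `P(X i)` in `l` variables,
whose values along the IP-set `t ↦ (x_1 t, …, x_l t)` are the `P(∑_{t∈β} x_i t)`; the IP
polynomial Szemerédi theorem for `A` and this family provides `a` and `β`. -/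

open Polynomial

/-- An admissible multivariate polynomial : vanishes at 0 and maps ℕ^j into ℕ. -/
def MvAdmissible {j : ℕ} (f : MvPolynomial (Fin j) ℤ) : Prop :=
  MvPolynomial.eval (fun _ => (0 : ℤ)) f = 0 ∧
    ∀ v : Fin j → ℕ, 0 ≤ MvPolynomial.eval (fun i => (v i : ℤ)) f


/-- B ⊆ ℕ has positive upper Banach density. -/
def PosUpperBanachDensity (B : Set ℕ) : Prop :=
  ∃ δ : ℝ, 0 < δ ∧ ∀ N : ℕ, ∃ n ≥ N, 0 < n ∧
    ∃ m : ℕ, δ * n ≤ (Nat.card ↥(B ∩ Set.Ioc m (m + n)) : ℝ)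

theorem MvPolynomial.eval_aeval_X {R σ : Type*} [CommRing R] (P : R[X]) (i : σ) (v : σ → R) :
    eval v (Polynomial.aeval (X i) P) = P.eval (v i) := by
  simpa using (Polynomial.aeval_algHom_apply (aeval v) (X i) P).symm

theorem IsAdmissible.mvAdmissible_aeval_X {P : ℤ[X]} (hP : IsAdmissible P) {l : ℕ} (i : Fin l) :
    MvAdmissible (aeval (MvPolynomial.X i) P) :=
  ⟨by rw [MvPolynomial.eval_aeval_X]; exact hP.1,
    fun v => by rw [MvPolynomial.eval_aeval_X]; exact hP.2 (v i)⟩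

theorem banachDensity_isJpSet
    (hSz : ∀ B : Set ℕ, PosUpperBanachDensity B →
      ∀ l : ℕ, ∀ G : Finset (MvPolynomial (Fin l) ℤ), (∀ g ∈ G, MvAdmissible g) →
      ∀ y : ℕ → Fin l → ℕ,
      ∃ x : ℕ, ∃ α : Finset ℕ, α.Nonempty ∧
        ∀ g ∈ G,
          ((x : ℤ) + MvPolynomial.eval (fun i => ((∑ t ∈ α, y t i : ℕ) : ℤ)) g).toNat ∈ B)
    (A : Set ℕ) (hA : PosUpperBanachDensity A) : JpSet A := by
  classical
  intro F hF l x
  let G : Finset (MvPolynomial (Fin l) ℤ) :=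
    (F ×ˢ Finset.univ).image fun p => aeval (MvPolynomial.X p.2) p.1
  have hG : ∀ g ∈ G, MvAdmissible g := by
    simp only [G, Finset.mem_image, Finset.mem_product]
    rintro _ ⟨⟨P, i⟩, ⟨hP, -⟩, rfl⟩
    exact (hF P hP).mvAdmissible_aeval_X i
  obtain ⟨a, β, hβ, hmem⟩ := hSz A hA l G hG fun t i => x i t
  refine ⟨a, β, hβ, fun P hP i => ?_⟩
  have hPi : aeval (MvPolynomial.X i) P ∈ G :=
    Finset.mem_image.2 ⟨(P, i), Finset.mem_product.2 ⟨hP, Finset.mem_univ i⟩, rfl⟩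
  have h := hmem _ hPi
  rwa [MvPolynomial.eval_aeval_X] at h
end
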